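/- (Lemma 5.5.) Let d ≥ 1 and 0 < r < 2. If f is an eigenfunction of the integral operator 𝒦_r^d with eigenvalue λ ≠ 0, then f has a continuous representative: there exists a continuous function g : [−1,1]^d → ℝ such that f = g ν_d-almost everywhere. -/

import Mathlib

open MeasureTheory

noncomputable section

/-- The cube `[-1,1]^d` in `ℝ^d`. -/
def cube (d : ℕ) : Set (Fin d → ℝ) := Set.Icc (fun _ => (-1 : ℝ)) (fun _ => 1)

/-- The uniform probability measure `ν_d` on the cube `[-1,1]^d`. -/
def nud (d : ℕ) : Measure (Fin d → ℝ) :=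
  (volume (cube d))⁻¹ • volume.restrict (cube d)

open Classical in
/-- The connectivity kernel `h_r(x,y) = 𝟙{‖x-y‖_∞ ≤ r}` (the norm on `Fin d → ℝ` is the
sup norm). -/
def hkerd {d : ℕ} (r : ℝ) (x y : Fin d → ℝ) : ℝ := if ‖x - y‖ ≤ r then 1 else 0

/-- `H_r^d(x) = ∫ h_r(x,u) dν_d(u) = ∏_i H_r(x_i)`. -/
def Hd (d : ℕ) (r : ℝ) (x : Fin d → ℝ) : ℝ := ∫ u, hkerd r x u ∂(nud d)

/-- The normalized kernel `K_r^d(x,y) = h_r(x,y)/√(H_r^d(x) H_r^d(y))`. -/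
def Kd (d : ℕ) (r : ℝ) (x y : Fin d → ℝ) : ℝ :=
  hkerd r x y / Real.sqrt (Hd d r x * Hd d r y)

/-- `f` is an eigenfunction with eigenvalue `lam` of the integral operator on
`L²([-1,1]^d, ν_d)` with kernel `K`: `f ∈ L²`, `f ≠ 0` in `L²`, and
`∫ K(x,y) f(y) dν_d(y) = lam f(x)` for `ν_d`-a.e. `x`. -/
def IsEigenfunD (d : ℕ) (K : (Fin d → ℝ) → (Fin d → ℝ) → ℝ) (lam : ℝ)
    (f : (Fin d → ℝ) → ℝ) : Prop :=
  MemLp f 2 (nud d) ∧ ¬ (f =ᵐ[nud d] (0 : (Fin d → ℝ) → ℝ)) ∧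
    ∀ᵐ x ∂(nud d), ∫ y, K x y * f y ∂(nud d) = lam * f x

/-!
Put `φ = f / √H_r^d`. The eigen-equation reads `λ f(x) = H_r^d(x)^{-1/2} ∫_{B_r(x)} φ dν_d`
for a.e. `x`, where `B_r(x)` is the closed sup-norm ball. Spheres are Lebesgue-null, so by
dominated convergence `x ↦ ∫_{B_r(x)} φ dν_d` is continuous for every integrable `φ`; with
`φ = 1` this makes `H_r^d` continuous, hence bounded below by a positive constant on the compact
cube, so that `φ` is indeed integrable and the right-hand side is a continuous representative.
-/

open Set Metric ProbabilityTheory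

theorem continuous_setIntegral_closedBall {E : Type*} [NormedAddCommGroup E] [NormedSpace ℝ E]
    [FiniteDimensional ℝ E] [MeasurableSpace E] [BorelSpace E] {μ ν : Measure E}
    [μ.IsAddHaarMeasure] (hν : ν ≪ μ) {r : ℝ} (hr : r ≠ 0) {φ : E → ℝ} (hφ : Integrable φ ν) :
    Continuous fun x => ∫ y in closedBall x r, φ y ∂ν := by
  simp_rw [← integral_indicator measurableSet_closedBall]
  refine continuous_iff_continuousAt.2 fun x₀ => continuousAt_of_dominated
    (bound := fun y => ‖φ y‖) ?_ ?_ hφ.norm ?_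
  · exact .of_forall fun x => hφ.1.indicator measurableSet_closedBall
  · exact .of_forall fun x => .of_forall fun y => norm_indicator_le_norm_self _ _
  · have hsphere : ∀ᵐ y ∂ν, y ∉ sphere x₀ r :=
      measure_eq_zero_iff_ae_notMem.1 (hν (μ.addHaar_sphere_of_ne_zero x₀ hr))
    filter_upwards [hsphere] with y hy
    -- off that sphere, `x ↦ 𝟙{y ∈ closedBall x r}` is locally constant at `x₀`
    rcases lt_or_gt_of_ne (mt mem_sphere.2 hy) with hlt | hgt
    · refine (continuousAt_const (y := φ y)).congr ?_
      filter_upwards [isOpen_ball.mem_nhds (mem_ball'.2 hlt)] with x hx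
      exact (indicator_of_mem (mem_closedBall'.2 (mem_ball.1 hx).le) φ).symm
    · refine (continuousAt_const (y := (0 : ℝ))).congr ?_
      have hx₀ : x₀ ∈ (closedBall y r)ᶜ := mt mem_closedBall'.1 hgt.not_ge
      filter_upwards [isClosed_closedBall.isOpen_compl.mem_nhds hx₀] with x hx
      exact (indicator_of_notMem (mt mem_closedBall_comm.1 hx) φ).symm

theorem measure_closedBall_inter_closedBall_pos {E : Type*} [NormedAddCommGroup E]
    [NormedSpace ℝ E] [MeasurableSpace E] [OpensMeasurableSpace E] (μ : Measure E)
    [μ.IsOpenPosMeasure] {c x : E} {R r : ℝ} (hR : 0 < R) (hr : 0 < r)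
    (hx : x ∈ closedBall c R) : 0 < μ (closedBall c R ∩ closedBall x r) := by
  rw [← closure_ball c hR.ne'] at hx
  obtain ⟨y, hy, hxy⟩ := mem_closure_iff.1 hx r hr
  refine (isOpen_ball.inter isOpen_ball).measure_pos μ ⟨y, hy, mem_ball'.2 hxy⟩ |>.trans_le ?_
  exact measure_mono (inter_subset_inter ball_subset_closedBall ball_subset_closedBall)

theorem cube_eq_closedBall (d : ℕ) : cube d = closedBall 0 1 := by
  ext x
  simp [cube, mem_closedBall, dist_zero_right, pi_norm_le_iff_of_nonneg, abs_le, Pi.le_def,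
    forall_and]

theorem measurableSet_cube (d : ℕ) : MeasurableSet (cube d) := measurableSet_Icc

theorem nud_eq_cond (d : ℕ) : nud d = volume[|cube d] := rfl

theorem nud_absolutelyContinuous (d : ℕ) : nud d ≪ volume := cond_absolutelyContinuous

theorem volume_cube (d : ℕ) : volume (cube d) = 2 ^ d := by
  simp [cube, Real.volume_Icc_pi, one_add_one_eq_two]

instance (d : ℕ) : IsProbabilityMeasure (nud d) :=
  cond_isProbabilityMeasure_of_finite (by simp [volume_cube]) (by simp [volume_cube])

theorem hkerd_mul_eq_indicator {d : ℕ} (r : ℝ) (φ : (Fin d → ℝ) → ℝ) (x y : Fin d → ℝ) :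
    hkerd r x y * φ y = (closedBall x r).indicator φ y := by
  by_cases h : ‖x - y‖ ≤ r <;>
    simp [hkerd, indicator, mem_closedBall, dist_eq_norm, norm_sub_rev, h]

theorem integral_hkerd_mul {d : ℕ} (μ : Measure (Fin d → ℝ)) (r : ℝ) (φ : (Fin d → ℝ) → ℝ)
    (x : Fin d → ℝ) : ∫ y, hkerd r x y * φ y ∂μ = ∫ y in closedBall x r, φ y ∂μ := by
  simp_rw [hkerd_mul_eq_indicator, integral_indicator measurableSet_closedBall]

theorem Hd_eq_measureReal (d : ℕ) (r : ℝ) (x : Fin d → ℝ) :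
    Hd d r x = (nud d).real (closedBall x r) := by
  simpa [Hd] using integral_hkerd_mul (nud d) r 1 x

theorem continuous_Hd (d : ℕ) {r : ℝ} (hr : r ≠ 0) : Continuous (Hd d r) := by
  have hHd : Hd d r = fun x => ∫ y, hkerd r x y * 1 ∂nud d := by
    simp only [mul_one]; rfl
  simp_rw [hHd, integral_hkerd_mul]
  exact continuous_setIntegral_closedBall (nud_absolutelyContinuous d) hr (integrable_const 1)

theorem Hd_pos {d : ℕ} {r : ℝ} (hr : 0 < r) {x : Fin d → ℝ} (hx : x ∈ cube d) :
    0 < Hd d r x := by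
  rw [Hd_eq_measureReal]
  refine ENNReal.toReal_pos ?_ (measure_ne_top _ _)
  rw [nud_eq_cond, cond_apply (measurableSet_cube d)]
  refine mul_ne_zero (by simp [volume_cube]) ?_
  rw [cube_eq_closedBall] at hx ⊢
  exact (measure_closedBall_inter_closedBall_pos volume one_pos hr hx).ne'

theorem exists_pos_le_Hd (d : ℕ) {r : ℝ} (hr : 0 < r) :
    ∃ c > 0, ∀ x ∈ cube d, c ≤ Hd d r x := by
  obtain ⟨x₀, hx₀, hmin⟩ := (cube_eq_closedBall d ▸ isCompact_closedBall 0 1).exists_isMinOn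
    ⟨0, by simp [cube_eq_closedBall]⟩ (continuous_Hd d hr.ne').continuousOn
  exact ⟨Hd d r x₀, Hd_pos hr hx₀, fun x hx => hmin hx⟩

theorem integrable_div_sqrt_Hd {d : ℕ} {r : ℝ} (hr : 0 < r) {f : (Fin d → ℝ) → ℝ}
    (hf : Integrable f (nud d)) : Integrable (fun y => f y / √(Hd d r y)) (nud d) := by
  obtain ⟨c, hc, hcHd⟩ := exists_pos_le_Hd d hr
  simp_rw [div_eq_mul_inv]
  refine hf.mul_bdd (c := (√c)⁻¹)
    ((continuous_Hd d hr.ne').sqrt.measurable.inv.aestronglyMeasurable) ?_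
  filter_upwards [ae_cond_mem (measurableSet_cube d)] with y hy
  rw [norm_inv, Real.norm_of_nonneg (Real.sqrt_nonneg _)]
  exact inv_anti₀ (Real.sqrt_pos.2 hc) (Real.sqrt_le_sqrt (hcHd y hy))

theorem integral_Kd_mul (d : ℕ) (r : ℝ) (f : (Fin d → ℝ) → ℝ) (x : Fin d → ℝ) :
    ∫ y, Kd d r x y * f y ∂nud d
      = (√(Hd d r x))⁻¹ * ∫ y in closedBall x r, f y / √(Hd d r y) ∂nud d := by
  rw [← integral_hkerd_mul, ← integral_const_mul]
  congr 1 with y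
  rw [Kd, Real.sqrt_mul (by rw [Hd_eq_measureReal]; exact measureReal_nonneg)]
  field_simp

theorem eigenfunction_continuous_representative_general
    (d : ℕ) (r : ℝ) (hr0 : 0 < r)
    (lam : ℝ) (hlam : lam ≠ 0) (f : (Fin d → ℝ) → ℝ)
    (hf : IsEigenfunD d (Kd d r) lam f) :
    ∃ g : (Fin d → ℝ) → ℝ, ContinuousOn g (cube d) ∧ f =ᵐ[nud d] g := by
  obtain ⟨hf2, -, heig⟩ := hf
  set φ := fun y => f y / √(Hd d r y)
  have hφ : Integrable φ (nud d) := integrable_div_sqrt_Hd hr0 (hf2.integrable one_le_two)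
  refine ⟨fun x => lam⁻¹ * ((√(Hd d r x))⁻¹ * ∫ y in closedBall x r, φ y ∂nud d), ?_, ?_⟩
  · have hHd : ContinuousOn (fun x => (√(Hd d r x))⁻¹) (cube d) :=
      (continuous_Hd d hr0.ne').sqrt.continuousOn.inv₀
        fun x hx => (Real.sqrt_pos.2 (Hd_pos hr0 hx)).ne'
    exact continuousOn_const.mul (hHd.mul
      (continuous_setIntegral_closedBall (nud_absolutelyContinuous d) hr0.ne' hφ).continuousOn)
  · filter_upwards [heig] with x hx
    rw [← integral_Kd_mul, hx, inv_mul_cancel_left₀ hlam]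

/-- Lemma 5.5: every eigenfunction of `𝒦_r^d` with nonzero eigenvalue has a continuous
representative on the cube `[-1,1]^d`. -/
theorem eigenfunction_continuous_representative
    (d : ℕ) (hd : 0 < d) (r : ℝ) (hr0 : 0 < r) (hr2 : r < 2)
    (lam : ℝ) (hlam : lam ≠ 0) (f : (Fin d → ℝ) → ℝ)
    (hf : IsEigenfunD d (Kd d r) lam f) :
    ∃ g : (Fin d → ℝ) → ℝ, ContinuousOn g (cube d) ∧ f =ᵐ[nud d] g :=
  eigenfunction_continuous_representative_general d r hr0 lam hlam f hf
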